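/- arXiv:0807.1317 — 9 statements merged into one kernel-verified Lean document; each statement's English description precedes it below -/
import Mathlib

section
/- Let p ∈ ℤⁿ with all pᵢ positive and p superincreasing, i.e., p_i > p_1 + ⋯ + p_{i-1} for all i = 2,…,n. Then for every positive integer k, ℓ(p,k) = 0, where ℓ(p,k) = max{ℓ : for every F ⊆ {1,…,n} with |F| = ℓ, Σ_{i∈F} pᵢ ≤ k and Σ_{i∉F} pᵢ ≥ k+1}, with the convention that the maximum over the empty set is 0. -/
/-- `ellpk n p k` is the largest `ℓ` such that every subset `F ⊆ {1,…,n}` of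
cardinality `ℓ` satisfies `p(F) ≤ k` and `p(N∖F) ≥ k+1` (it is `0` if no such
`ℓ` exists). -/
noncomputable def ellpk (n : ℕ) (p : Fin n → ℤ) (k : ℤ) : ℕ :=
  sSup {ℓ : ℕ | ℓ ≤ n ∧ ∀ F : Finset (Fin n), F.card = ℓ →
    (∑ i ∈ F, p i) ≤ k ∧ k + 1 ≤ ∑ i ∈ Fᶜ, p i}

/-- If `p` is a positive superincreasing vector, then `ℓ(p,k) = 0` for every
positive integer `k`. -/
theorem ellpk_eq_zero_of_superincreasing (n : ℕ) (p : Fin n → ℤ)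
    (hp : ∀ i, 0 < p i)
    (hsi : ∀ i : Fin n, ∑ j ∈ Finset.univ.filter (· < i), p j < p i)
    (k : ℤ) (hk : 0 < k) :
    ellpk n p k = 0 := by
  have hsub : {ℓ : ℕ | ℓ ≤ n ∧ ∀ F : Finset (Fin n), F.card = ℓ →
      (∑ i ∈ F, p i) ≤ k ∧ k + 1 ≤ ∑ i ∈ Fᶜ, p i} ⊆ {0} := by
    rintro ℓ ⟨hln, hF⟩
    by_contra hne
    have hl1 : 1 ≤ ℓ := Nat.one_le_iff_ne_zero.2 hne
    have hn1 : 1 ≤ n := hl1.trans hln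
    set m : Fin n := ⟨n - 1, by omega⟩ with hm
    obtain ⟨F, hmF, -, hcard⟩ := Finset.exists_subsuperset_card_eq
      (Finset.subset_univ ({m} : Finset (Fin n)))
      (by simpa using hl1) (by simpa using hln)
    obtain ⟨h1, h2⟩ := hF F hcard
    have hmem : m ∈ F := hmF (Finset.mem_singleton_self m)
    have hFc : Fᶜ ⊆ Finset.univ.filter (· < m) := by
      intro j hj
      simp only [Finset.mem_compl] at hj
      simp only [Finset.mem_filter, Finset.mem_univ, true_and]
      have hjm : j ≠ m := fun h => hj (h ▸ hmem)
      have hlt : (j : ℕ) < n - 1 := by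
        have hjn := j.isLt
        by_contra hc
        exact hjm (Fin.ext (by simp only [hm]; omega))
      exact hlt
    have h3 : (∑ i ∈ Fᶜ, p i) ≤ ∑ j ∈ Finset.univ.filter (· < m), p j :=
      Finset.sum_le_sum_of_subset_of_nonneg hFc (fun i _ _ => (hp i).le)
    have h4 : p m ≤ ∑ i ∈ F, p i :=
      Finset.single_le_sum (fun i _ => (hp i).le) hmem
    linarith [hsi m]
  rcases Set.subset_singleton_iff_eq.1 hsub with h | h <;>
    (rw [ellpk, h]; simp)
end

section
/- Let a, p ∈ ℤⁿ_{++}, u ∈ (ℤ_{++} ∪ {∞})ⁿ, β₁ ≤ β₂ integers with 0 < β₁ and β₂ < a·u, and k an integer with 0 ≤ k < p·u. Then the following are equivalent: (1) for every x ∈ ℝⁿ with 0 ≤ x ≤ u and β₁ ≤ a·x ≤ β₂, it holds that k < p·x < k+1; (2) max{a·x : p·x ≤ k, 0 ≤ x ≤ u} < β₁ and β₂ < min{a·x : p·x ≥ k+1, 0 ≤ x ≤ u}. -/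
/-- Equivalence between the split disjunction `px ≤ k ∨ px ≥ k+1` proving
infeasibility of the knapsack `β₁ ≤ ax ≤ β₂, 0 ≤ x ≤ u`, and the bounds
`max{ax : px ≤ k, 0 ≤ x ≤ u} < β₁` and `β₂ < min{ax : px ≥ k+1, 0 ≤ x ≤ u}`
(expressed pointwise; the optima are attained on the compact box). -/
theorem split_disjunction_iff (n : ℕ) (a p u : Fin n → ℤ)
    (ha : ∀ i, 0 < a i) (hp : ∀ i, 0 < p i) (hu : ∀ i, 0 < u i)
    (β₁ β₂ k : ℤ) (hβ₁pos : 0 < β₁) (hβ : β₁ ≤ β₂)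
    (hβ₂ : β₂ < ∑ i, a i * u i)
    (hk0 : 0 ≤ k) (hk : k < ∑ i, p i * u i) :
    (∀ x : Fin n → ℝ, (∀ i, 0 ≤ x i ∧ x i ≤ (u i : ℝ)) →
        (β₁ : ℝ) ≤ ∑ i, (a i : ℝ) * x i → (∑ i, (a i : ℝ) * x i) ≤ (β₂ : ℝ) →
        ((k : ℝ) < ∑ i, (p i : ℝ) * x i ∧ (∑ i, (p i : ℝ) * x i) < (k : ℝ) + 1))
    ↔
    ((∀ x : Fin n → ℝ, (∀ i, 0 ≤ x i ∧ x i ≤ (u i : ℝ)) →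
        (∑ i, (p i : ℝ) * x i) ≤ (k : ℝ) → (∑ i, (a i : ℝ) * x i) < (β₁ : ℝ)) ∧
     (∀ x : Fin n → ℝ, (∀ i, 0 ≤ x i ∧ x i ≤ (u i : ℝ)) →
        (k : ℝ) + 1 ≤ ∑ i, (p i : ℝ) * x i → (β₂ : ℝ) < ∑ i, (a i : ℝ) * x i)) := by
  constructor
  · intro h1
    constructor
    · -- max side
      intro x hx hpx
      by_contra hax
      push_neg at hax
      set S : ℝ := ∑ i, (a i : ℝ) * x i with hS
      have hβ₁R : (0 : ℝ) < (β₁ : ℝ) := by exact_mod_cast hβ₁pos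
      have hS0 : 0 < S := lt_of_lt_of_le hβ₁R hax
      set t : ℝ := (β₁ : ℝ) / S with htdef
      have ht0 : 0 < t := div_pos hβ₁R hS0
      have ht1 : t ≤ 1 := (div_le_one hS0).mpr hax
      have hfeas : ∀ i, 0 ≤ t * x i ∧ t * x i ≤ (u i : ℝ) := by
        intro i
        obtain ⟨h0, h1'⟩ := hx i
        constructor
        · exact mul_nonneg ht0.le h0
        · calc t * x i ≤ 1 * x i := mul_le_mul_of_nonneg_right ht1 h0
            _ = x i := one_mul _
            _ ≤ (u i : ℝ) := h1'
      have hA : ∑ i, (a i : ℝ) * (t * x i) = (β₁ : ℝ) := by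
        have : ∑ i, (a i : ℝ) * (t * x i) = t * S := by
          rw [hS, Finset.mul_sum]
          exact Finset.sum_congr rfl fun i _ => by ring
        rw [this, htdef, div_mul_cancel₀ _ hS0.ne']
      have hP : ∑ i, (p i : ℝ) * (t * x i) = t * ∑ i, (p i : ℝ) * x i := by
        rw [Finset.mul_sum]
        exact Finset.sum_congr rfl fun i _ => by ring
      have hPx0 : 0 ≤ ∑ i, (p i : ℝ) * x i := by
        apply Finset.sum_nonneg
        intro i _
        have : (0:ℝ) ≤ (p i : ℝ) := by exact_mod_cast (hp i).le
        exact mul_nonneg this (hx i).1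
      have hβR : (β₁ : ℝ) ≤ (β₂ : ℝ) := by exact_mod_cast hβ
      obtain ⟨hk1, _⟩ := h1 (fun i => t * x i) hfeas (le_of_eq hA.symm)
        (by rw [hA]; exact hβR)
      have : ∑ i, (p i : ℝ) * (t * x i) ≤ (k : ℝ) := by
        rw [hP]
        calc t * ∑ i, (p i : ℝ) * x i ≤ 1 * ∑ i, (p i : ℝ) * x i :=
              mul_le_mul_of_nonneg_right ht1 hPx0
          _ = ∑ i, (p i : ℝ) * x i := one_mul _
          _ ≤ (k : ℝ) := hpx
      exact absurd hk1 (not_lt.mpr this)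
    · -- min side
      intro x hx hpx
      by_contra hax
      push_neg at hax
      set Ax : ℝ := ∑ i, (a i : ℝ) * x i with hAx
      set Au : ℝ := ∑ i, (a i : ℝ) * (u i : ℝ) with hAu
      have hAuβ : (β₂ : ℝ) < Au := by
        have : ((β₂ : ℤ) : ℝ) < ((∑ i, a i * u i : ℤ) : ℝ) := by exact_mod_cast hβ₂
        simpa [hAu, Int.cast_sum] using this
      have hd : 0 < Au - Ax := by linarith
      set t : ℝ := ((β₂ : ℝ) - Ax) / (Au - Ax) with htdef
      have ht0 : 0 ≤ t := div_nonneg (by linarith) hd.le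
      have ht1 : t ≤ 1 := (div_le_one hd).mpr (by linarith)
      set y : Fin n → ℝ := fun i => x i + t * ((u i : ℝ) - x i) with hy
      have hfeas : ∀ i, 0 ≤ y i ∧ y i ≤ (u i : ℝ) := by
        intro i
        obtain ⟨h0, h1'⟩ := hx i
        have hux : 0 ≤ (u i : ℝ) - x i := by linarith
        constructor
        · have := mul_nonneg ht0 hux
          simp only [hy]; linarith
        · have : t * ((u i : ℝ) - x i) ≤ 1 * ((u i : ℝ) - x i) :=
            mul_le_mul_of_nonneg_right ht1 hux
          simp only [hy]; linarith
      have hAy : ∑ i, (a i : ℝ) * y i = (β₂ : ℝ) := by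
        have : ∑ i, (a i : ℝ) * y i = Ax + t * (Au - Ax) := by
          simp only [hy]
          rw [hAx, hAu, mul_sub, Finset.mul_sum, Finset.mul_sum,
            ← Finset.sum_sub_distrib, ← Finset.sum_add_distrib]
          exact Finset.sum_congr rfl fun i _ => by ring
        rw [this, htdef, div_mul_cancel₀ _ hd.ne']
        ring
      have hPy : ∑ i, (p i : ℝ) * y i = (∑ i, (p i : ℝ) * x i)
          + t * ((∑ i, (p i : ℝ) * (u i : ℝ)) - ∑ i, (p i : ℝ) * x i) := by
        simp only [hy]
        rw [mul_sub, Finset.mul_sum, Finset.mul_sum, ← Finset.sum_sub_distrib,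
          ← Finset.sum_add_distrib]
        exact Finset.sum_congr rfl fun i _ => by ring
      have hPux : 0 ≤ (∑ i, (p i : ℝ) * (u i : ℝ)) - ∑ i, (p i : ℝ) * x i := by
        rw [← Finset.sum_sub_distrib]
        apply Finset.sum_nonneg
        intro i _
        have hpi : (0:ℝ) ≤ (p i : ℝ) := by exact_mod_cast (hp i).le
        have := (hx i).2
        nlinarith
      have hβR : (β₁ : ℝ) ≤ (β₂ : ℝ) := by exact_mod_cast hβ
      obtain ⟨_, hk2⟩ := h1 y hfeas (by rw [hAy]; exact hβR) (le_of_eq hAy)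
      have : (k : ℝ) + 1 ≤ ∑ i, (p i : ℝ) * y i := by
        rw [hPy]
        nlinarith
      exact absurd hk2 (not_lt.mpr this)
  · rintro ⟨h2, h3⟩ x hx ha1 ha2
    constructor
    · by_contra hP
      push_neg at hP
      exact absurd ha1 (not_le.mpr (h2 x hx hP))
    · by_contra hP
      push_neg at hP
      exact absurd ha2 (not_le.mpr (h3 x hx hP))
end

section
/- Let a, p ∈ ℤⁿ_{++}, u = e (the all-ones vector), and β₁ ≤ β₂ integers with 0 < β₁ ≤ β₂ < Σaᵢ. Suppose that for every x ∈ [0,1]ⁿ with β₁ ≤ a·x ≤ β₂ we have k < p·x < k+1, for some integer k with 0 ≤ k < Σpᵢ. Then for every subset F ⊆ {1,…,n} with |F| = ℓ(p,k) and every 0/1 assignment x̄ ∈ {0,1}^F, there exists x ∈ [0,1]ⁿ with x_i = x̄_i for i ∈ F and β₁ ≤ a·x ≤ β₂. Consequently ordinary branch-and-bound branching on individual variables must enumerate at least 2^{ℓ(p,k)} LP-feasible nodes to prove infeasibility. -/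
/-- If the infeasibility of the 0/1 knapsack `β₁ ≤ ax ≤ β₂` is proven by the
split disjunction `px ≤ k ∨ px ≥ k+1`, then every node of ordinary
branch-and-bound that fixes the variables of a set `F` of cardinality
`ℓ(p,k)` to 0/1 values is LP-feasible; hence ordinary B&B enumerates at least
`2^{ℓ(p,k)}` nodes. -/
theorem bb_nodes_lp_feasible (n : ℕ) (a p : Fin n → ℤ)
    (ha : ∀ i, 0 < a i) (hp : ∀ i, 0 < p i)
    (β₁ β₂ k : ℤ) (hβ₁pos : 0 < β₁) (hβ : β₁ ≤ β₂) (hβ₂ : β₂ < ∑ i, a i)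
    (hk0 : 0 ≤ k) (hk : k < ∑ i, p i)
    (hsplit : ∀ x : Fin n → ℝ, (∀ i, 0 ≤ x i ∧ x i ≤ 1) →
      (β₁ : ℝ) ≤ ∑ i, (a i : ℝ) * x i → (∑ i, (a i : ℝ) * x i) ≤ (β₂ : ℝ) →
      ((k : ℝ) < ∑ i, (p i : ℝ) * x i ∧ (∑ i, (p i : ℝ) * x i) < (k : ℝ) + 1)) :
    ∀ F : Finset (Fin n), F.card = ellpk n p k →
      ∀ xb : Fin n → ℝ, (∀ i ∈ F, xb i = 0 ∨ xb i = 1) →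
        ∃ x : Fin n → ℝ, (∀ i, 0 ≤ x i ∧ x i ≤ 1) ∧ (∀ i ∈ F, x i = xb i) ∧
          (β₁ : ℝ) ≤ ∑ i, (a i : ℝ) * x i ∧ (∑ i, (a i : ℝ) * x i) ≤ (β₂ : ℝ) := by
  classical
  intro F hF xb hxb
  -- the sup is attained
  have hmem : ellpk n p k ∈ {ℓ : ℕ | ℓ ≤ n ∧ ∀ F : Finset (Fin n), F.card = ℓ →
      (∑ i ∈ F, p i) ≤ k ∧ k + 1 ≤ ∑ i ∈ Fᶜ, p i} := by
    apply Nat.sSup_mem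
    · refine ⟨0, Nat.zero_le n, ?_⟩
      intro G hG
      rw [Finset.card_eq_zero] at hG
      subst hG
      simp only [Finset.sum_empty, Finset.compl_empty]
      exact ⟨hk0, by linarith⟩
    · exact ⟨n, fun ℓ hℓ => hℓ.1⟩
  obtain ⟨hPk, hQk⟩ := hmem.2 F hF
  -- pieces
  set F₁ : Finset (Fin n) := F.filter (fun i => xb i = 1) with hF₁def
  set F₀ : Finset (Fin n) := F.filter (fun i => ¬ xb i = 1) with hF₀def
  set A1 : ℝ := ∑ i ∈ F₁, (a i : ℝ) with hA1
  set A0 : ℝ := ∑ i ∈ F₀, (a i : ℝ) with hA0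
  set AC : ℝ := ∑ i ∈ Fᶜ, (a i : ℝ) with hAC
  set P1 : ℝ := ∑ i ∈ F₁, (p i : ℝ) with hP1
  set P0 : ℝ := ∑ i ∈ F₀, (p i : ℝ) with hP0
  set PC : ℝ := ∑ i ∈ Fᶜ, (p i : ℝ) with hPC
  have ha' : ∀ i, (0:ℝ) < (a i : ℝ) := fun i => by exact_mod_cast ha i
  have hp' : ∀ i, (0:ℝ) < (p i : ℝ) := fun i => by exact_mod_cast hp i
  have hA1nn : 0 ≤ A1 := Finset.sum_nonneg fun i _ => (ha' i).le
  have hA0nn : 0 ≤ A0 := Finset.sum_nonneg fun i _ => (ha' i).le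
  have hACnn : 0 ≤ AC := Finset.sum_nonneg fun i _ => (ha' i).le
  have hP1nn : 0 ≤ P1 := Finset.sum_nonneg fun i _ => (hp' i).le
  have hP0nn : 0 ≤ P0 := Finset.sum_nonneg fun i _ => (hp' i).le
  have hsplitF : ∀ (f : Fin n → ℝ), F₁.sum f + F₀.sum f = F.sum f := fun f =>
    Finset.sum_filter_add_sum_filter_not F _ f
  have hAsplit : A1 + A0 = ∑ i ∈ F, (a i : ℝ) := hsplitF _
  have hPsplit : P1 + P0 = ∑ i ∈ F, (p i : ℝ) := hsplitF _
  have hAtot : (∑ i ∈ F, (a i : ℝ)) + AC = ∑ i, (a i : ℝ) :=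
    Finset.sum_add_sum_compl F _
  have hPtot : (∑ i ∈ F, (p i : ℝ)) + PC = ∑ i, (p i : ℝ) :=
    Finset.sum_add_sum_compl F _
  have hPFk : (∑ i ∈ F, (p i : ℝ)) ≤ (k : ℝ) := by exact_mod_cast hPk
  have hPCk : (k : ℝ) + 1 ≤ PC := by
    have : ((k + 1 : ℤ) : ℝ) ≤ ((∑ i ∈ Fᶜ, p i : ℤ) : ℝ) := by exact_mod_cast hQk
    push_cast at this
    linarith
  have hβ₁R : (0:ℝ) < (β₁ : ℝ) := by exact_mod_cast hβ₁pos
  have hβR : (β₁ : ℝ) ≤ (β₂ : ℝ) := by exact_mod_cast hβ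
  have hβ₂R : (β₂ : ℝ) < ∑ i, (a i : ℝ) := by exact_mod_cast hβ₂
  have hP1k : P1 ≤ (k : ℝ) := by linarith
  -- Claim 1 : A1 < β₁
  have claim1 : A1 < (β₁ : ℝ) := by
    by_contra h
    push_neg at h   -- β₁ ≤ A1
    have hA1pos : 0 < A1 := lt_of_lt_of_le hβ₁R h
    set t : ℝ := (β₁ : ℝ) / A1 with ht
    have ht0 : 0 < t := div_pos hβ₁R hA1pos
    have ht1 : t ≤ 1 := (div_le_one hA1pos).mpr h
    set x : Fin n → ℝ := fun i => if i ∈ F₁ then t else 0 with hx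
    have hxb' : ∀ i, 0 ≤ x i ∧ x i ≤ 1 := by
      intro i; simp only [hx]; split
      · exact ⟨ht0.le, ht1⟩
      · exact ⟨le_refl 0, zero_le_one⟩
    have hax : ∑ i, (a i : ℝ) * x i = (β₁ : ℝ) := by
      have : ∑ i, (a i : ℝ) * x i = ∑ i ∈ F₁, (a i : ℝ) * t := by
        rw [← Finset.sum_subset (Finset.subset_univ F₁)
          (fun i _ hi => by simp [hx, hi])]
        exact Finset.sum_congr rfl fun i hi => by simp [hx, hi]
      rw [this, ← Finset.sum_mul, ← hA1, ht, mul_div_cancel₀ _ (ne_of_gt hA1pos)]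
    have hpx : ∑ i, (p i : ℝ) * x i = P1 * t := by
      have : ∑ i, (p i : ℝ) * x i = ∑ i ∈ F₁, (p i : ℝ) * t := by
        rw [← Finset.sum_subset (Finset.subset_univ F₁)
          (fun i _ hi => by simp [hx, hi])]
        exact Finset.sum_congr rfl fun i hi => by simp [hx, hi]
      rw [this, ← Finset.sum_mul, ← hP1]
    have := (hsplit x hxb' (le_of_eq hax.symm) (by rw [hax]; exact hβR)).1
    rw [hpx] at this
    have h2 : P1 * t ≤ P1 * 1 := mul_le_mul_of_nonneg_left ht1 hP1nn
    linarith
  -- Claim 2 : β₁ ≤ A1 + AC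
  have claim2 : (β₁ : ℝ) ≤ A1 + AC := by
    by_contra h
    push_neg at h   -- A1 + AC < β₁
    have hA0pos : 0 < A0 := by linarith
    set t : ℝ := ((β₁ : ℝ) - A1 - AC) / A0 with ht
    have ht0 : 0 < t := div_pos (by linarith) hA0pos
    have ht1 : t ≤ 1 := (div_le_one hA0pos).mpr (by linarith)
    set x : Fin n → ℝ := fun i => if i ∈ F₀ then t else 1 with hx
    have hxb' : ∀ i, 0 ≤ x i ∧ x i ≤ 1 := by
      intro i; simp only [hx]; split
      · exact ⟨ht0.le, ht1⟩
      · exact ⟨zero_le_one, le_refl 1⟩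
    have hsum : ∀ (c : Fin n → ℝ),
        ∑ i, c i * x i = (∑ i ∈ F₀, c i) * t + ∑ i ∈ F₀ᶜ, c i := by
      intro c
      rw [← Finset.sum_add_sum_compl F₀ (fun i => c i * x i)]
      congr 1
      · rw [Finset.sum_mul]
        exact Finset.sum_congr rfl fun i hi => by simp [hx, hi]
      · exact Finset.sum_congr rfl fun i hi => by
          simp [hx, Finset.mem_compl.mp hi]
    have hA0c : ∑ i ∈ F₀ᶜ, (a i : ℝ) = A1 + AC := by
      have := Finset.sum_add_sum_compl F₀ (fun i => (a i : ℝ))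
      linarith
    have hP0c : ∑ i ∈ F₀ᶜ, (p i : ℝ) = P1 + PC := by
      have := Finset.sum_add_sum_compl F₀ (fun i => (p i : ℝ))
      linarith
    have hax : ∑ i, (a i : ℝ) * x i = (β₁ : ℝ) := by
      have hA0t : A0 * t = (β₁ : ℝ) - A1 - AC := by
        rw [ht, mul_div_cancel₀ _ (ne_of_gt hA0pos)]
      rw [hsum, hA0c, ← hA0, mul_comm]
      linarith
    have := (hsplit x hxb' (le_of_eq hax.symm) (by rw [hax]; exact hβR)).2
    rw [hsum, hP0c, ← hP0] at this
    nlinarith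
  -- construct the point
  have hACpos : 0 < AC := by linarith
  set t : ℝ := ((β₁ : ℝ) - A1) / AC with ht
  have ht0 : 0 ≤ t := le_of_lt (div_pos (by linarith) hACpos)
  have ht1 : t ≤ 1 := (div_le_one hACpos).mpr (by linarith)
  set x : Fin n → ℝ := fun i => if i ∈ F then xb i else t with hx
  have hax : ∑ i, (a i : ℝ) * x i = (β₁ : ℝ) := by
    rw [← Finset.sum_add_sum_compl F (fun i => (a i : ℝ) * x i)]
    have h1 : ∑ i ∈ F, (a i : ℝ) * x i = A1 := by
      have hcongr : ∑ i ∈ F, (a i : ℝ) * x i = ∑ i ∈ F, (a i : ℝ) * xb i :=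
        Finset.sum_congr rfl fun i hi => by simp [hx, hi]
      rw [hcongr, ← hsplitF (fun i => (a i : ℝ) * xb i), hA1]
      have e1 : ∑ i ∈ F₁, (a i : ℝ) * xb i = ∑ i ∈ F₁, (a i : ℝ) := by
        refine Finset.sum_congr rfl fun i hi => ?_
        rw [(Finset.mem_filter.mp hi).2, mul_one]
      have e0 : ∑ i ∈ F₀, (a i : ℝ) * xb i = 0 := by
        refine Finset.sum_eq_zero fun i hi => ?_
        obtain ⟨hiF, hne⟩ := Finset.mem_filter.mp hi
        rcases hxb i hiF with h | h
        · rw [h, mul_zero]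
        · exact absurd h hne
      rw [e1, e0, add_zero]
    have h2 : ∑ i ∈ Fᶜ, (a i : ℝ) * x i = AC * t := by
      have hcongr : ∑ i ∈ Fᶜ, (a i : ℝ) * x i = ∑ i ∈ Fᶜ, (a i : ℝ) * t :=
        Finset.sum_congr rfl fun i hi => by
          simp [hx, Finset.mem_compl.mp hi]
      rw [hcongr, ← Finset.sum_mul, hAC]
    rw [h1, h2, hAC, ht, mul_div_cancel₀ _ (ne_of_gt hACpos)]
    ring
  refine ⟨x, ?_, ?_, le_of_eq hax.symm, by rw [hax]; exact hβR⟩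
  · intro i
    by_cases hi : i ∈ F
    · simp only [hx, hi, if_pos]
      rcases hxb i hi with h | h <;> rw [h] <;> norm_num
    · simp only [hx, hi, if_neg, not_false_iff]
      exact ⟨ht0, ht1⟩
  · intro i hi; simp [hx, hi]
end

section
/- Let a, p ∈ ℤⁿ_{++} and β a positive integer, and suppose that for every x ∈ ℝⁿ_{≥0} with a·x = β we have k < p·x < k+1, for some integer k ≥ 0. Then for every x̄ ∈ ℤ^{n-1}_{≥0} with Σ_{i=1}^{n-1} x̄ᵢ ≤ ⌊k/max_i pᵢ⌋, there exists x ∈ ℝⁿ_{≥0} with xᵢ = x̄ᵢ for i = 1,…,n−1 and a·x = β. Consequently the number of such LP-feasible partial fixings is at least C(⌊k/‖p‖_∞⌋ + n − 1, n − 1). -/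
/-!
Write `M = ‖p‖_∞`. A fixing `x̄` of the first `n` variables with `∑ x̄ᵢ ≤ ⌊k / M⌋`, completed by
`0`, gives a point `y ≥ 0` with `p·y ≤ M ∑ x̄ᵢ ≤ k`. If `a·y > β`, the rescaled point
`(β / a·y) y` satisfies the knapsack equation and still has `p`-value at most `k`, contradicting
the split. Hence `a·y ≤ β`, and the last variable absorbs the slack `β - a·y`.
The count is stars and bars: fixings with `∑ x̄ᵢ ≤ K` contain the truncations of the
`C(K + n, n)` tuples in `ℕⁿ⁺¹` summing to `K`.
-/

open Finset Matrix

theorem choose_le_ncard_sum_le (n K : ℕ) :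
    (K + n).choose n ≤ {x : Fin n → ℕ | ∑ i, x i ≤ K}.ncard := by
  have hsum (P : Fin (n + 1) → ℕ) : ∑ i, P i = ∑ i, Fin.init P i + P (Fin.last n) :=
    Fin.sum_univ_castSucc P
  have hcard : {P : Fin (n + 1) → ℕ | ∑ i, P i = K}.ncard = (K + n).choose n := by
    rw [← Nat.card_coe_set_eq, Set.coe_ofPred, ← Nat.card_congr (Sym.equivNatSumOfFintype _ K),
      Sym.natCard_sym_eq_choose, Nat.card_fin, Nat.add_right_comm, Nat.add_sub_cancel,
      add_comm n K, Nat.choose_symm_add]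
  have hfin : {x : Fin n → ℕ | ∑ i, x i ≤ K}.Finite :=
    (Set.finite_Iic fun _ => K).subset fun x hx i =>
      (single_le_sum (fun j _ => Nat.zero_le (x j)) (mem_univ i)).trans hx
  rw [← hcard]
  refine Set.ncard_le_ncard_of_injOn Fin.init (fun P hP => ?_) (fun P hP Q hQ hPQ => ?_) hfin
  · simp only [Set.mem_ofPred_eq] at hP ⊢
    linarith [hsum P]
  · simp only [Set.mem_ofPred_eq] at hP hQ
    have hlast : P (Fin.last n) = Q (Fin.last n) := by linarith [hsum Q, hPQ ▸ hsum P]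
    rw [← Fin.snoc_init_self P, ← Fin.snoc_init_self Q, hPQ, hlast]

theorem Fin.snoc_nonneg {α : Type*} [Preorder α] [Zero α] {n : ℕ} {y : Fin n → α} {c : α}
    (hy : 0 ≤ y) (hc : 0 ≤ c) : 0 ≤ (Fin.snoc y c : Fin (n + 1) → α) :=
  fun i => Fin.lastCases (by simpa) (fun i => by simpa using hy i) i

theorem dotProduct_snoc {α : Type*} [NonUnitalNonAssocSemiring α] {n : ℕ} (a : Fin (n + 1) → α)
    (y : Fin n → α) (c : α) :
    a ⬝ᵥ Fin.snoc y c = (fun i => a i.castSucc) ⬝ᵥ y + a (Fin.last n) * c := by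
  simp [dotProduct, Fin.sum_univ_castSucc]

theorem dotProduct_le_of_sum_le_ediv {ι : Type*} [Fintype ι] {p z : ι → ℤ} {M k : ℤ} (hM : 0 < M)
    (hpM : ∀ i, p i ≤ M) (hz : 0 ≤ z) (hzk : ∑ i, z i ≤ k / M) : p ⬝ᵥ z ≤ k :=
  calc p ⬝ᵥ z ≤ ∑ i, M * z i := sum_le_sum fun i _ => mul_le_mul_of_nonneg_right (hpM i) (hz i)
    _ = M * ∑ i, z i := (mul_sum ..).symm
    _ ≤ M * (k / M) := mul_le_mul_of_nonneg_left hzk hM.le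
    _ ≤ k := Int.mul_ediv_self_le hM.ne'

theorem dotProduct_le_of_forall_dotProduct_eq_lt {ι 𝕜 : Type*} [Fintype ι] [Field 𝕜] [LinearOrder 𝕜]
    [IsStrictOrderedRing 𝕜] {a p y : ι → 𝕜} {β k : 𝕜} (hβ : 0 ≤ β) (hk : 0 ≤ k)
    (hsplit : ∀ x, 0 ≤ x → a ⬝ᵥ x = β → k < p ⬝ᵥ x) (hy : 0 ≤ y) (hpy : p ⬝ᵥ y ≤ k) :
    a ⬝ᵥ y ≤ β := by
  by_contra! hay
  have hay₀ : 0 < a ⬝ᵥ y := hβ.trans_lt hay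
  set t := β / (a ⬝ᵥ y)
  have ht₀ : 0 ≤ t := div_nonneg hβ hay₀.le
  have ht₁ : t ≤ 1 := div_le_one_of_le₀ hay.le hay₀.le
  have hfeas : a ⬝ᵥ t • y = β := by
    rw [dotProduct_smul, smul_eq_mul, div_mul_cancel₀ _ hay₀.ne']
  have hlt := hsplit (t • y) (smul_nonneg ht₀ hy) hfeas
  rw [dotProduct_smul, smul_eq_mul] at hlt
  nlinarith

theorem exists_nonneg_dotProduct_snoc_eq {𝕜 : Type*} [Field 𝕜] [LinearOrder 𝕜]
    [IsStrictOrderedRing 𝕜] {n : ℕ} {a p : Fin (n + 1) → 𝕜} {y : Fin n → 𝕜} {β k : 𝕜}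
    (ha : 0 < a (Fin.last n)) (hβ : 0 ≤ β) (hk : 0 ≤ k)
    (hsplit : ∀ x, 0 ≤ x → a ⬝ᵥ x = β → k < p ⬝ᵥ x) (hy : 0 ≤ y)
    (hpy : (fun i => p i.castSucc) ⬝ᵥ y ≤ k) :
    ∃ c, 0 ≤ c ∧ a ⬝ᵥ Fin.snoc y c = β := by
  have hay := dotProduct_le_of_forall_dotProduct_eq_lt hβ hk hsplit (Fin.snoc_nonneg hy le_rfl)
    (by rwa [dotProduct_snoc, mul_zero, add_zero])
  rw [dotProduct_snoc, mul_zero, add_zero] at hay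
  refine ⟨(β - (fun i => a i.castSucc) ⬝ᵥ y) / a (Fin.last n),
    div_nonneg (sub_nonneg.2 hay) ha.le, ?_⟩
  rw [dotProduct_snoc, mul_div_cancel₀ _ ha.ne', add_sub_cancel]

/-- If the infeasibility of the unbounded equality knapsack `ax = β, x ≥ 0`
(in dimension `n+1`) is proven by the split disjunction `px ≤ k ∨ px ≥ k+1`,
then every fixing of the first `n` variables to nonnegative integers with sum
at most `⌊k/‖p‖_∞⌋` is LP-feasible; the number of such fixings is at least
`C(⌊k/‖p‖_∞⌋ + n, n)`. -/
theorem unbounded_bb_nodes (n : ℕ) (a p : Fin (n + 1) → ℤ)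
    (ha : ∀ i, 0 < a i) (hp : ∀ i, 0 < p i)
    (β : ℤ) (hβ : 0 < β) (k : ℤ) (hk : 0 ≤ k)
    (hsplit : ∀ x : Fin (n + 1) → ℝ, (∀ i, 0 ≤ x i) →
      (∑ i, (a i : ℝ) * x i) = (β : ℝ) →
      ((k : ℝ) < ∑ i, (p i : ℝ) * x i ∧ (∑ i, (p i : ℝ) * x i) < (k : ℝ) + 1)) :
    (∀ xb : Fin n → ℕ,
      (∑ i, (xb i : ℤ)) ≤ k / (Finset.univ.sup' Finset.univ_nonempty p) →
      ∃ x : Fin (n + 1) → ℝ, (∀ i, 0 ≤ x i) ∧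
        (∀ i : Fin n, x i.castSucc = (xb i : ℝ)) ∧
        (∑ i, (a i : ℝ) * x i) = (β : ℝ)) ∧
    ((k / (Finset.univ.sup' Finset.univ_nonempty p)).toNat + n).choose n ≤
      Set.ncard {xb : Fin n → ℕ |
        (∑ i, (xb i : ℤ)) ≤ k / (Finset.univ.sup' Finset.univ_nonempty p)} := by
  set M := Finset.univ.sup' Finset.univ_nonempty p
  have hpM (i) : p i ≤ M := le_sup' p (mem_univ i)
  have hM : 0 < M := (hp 0).trans_le (hpM 0)
  refine ⟨fun xb hxb => ?_, ?_⟩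
  · have hpxb : (fun i => (p i.castSucc : ℝ)) ⬝ᵥ (fun i => (xb i : ℝ)) ≤ k := by
      have := dotProduct_le_of_sum_le_ediv (p := fun i => p i.castSucc) (z := fun i => xb i) hM
        (fun _ => hpM _) (fun _ => Nat.cast_nonneg _) hxb
      simp only [dotProduct] at this ⊢
      exact_mod_cast this
    obtain ⟨c, hc, hax⟩ := exists_nonneg_dotProduct_snoc_eq (a := fun i => (a i : ℝ))
      (by exact_mod_cast ha _) (by exact_mod_cast hβ.le) (by exact_mod_cast hk)
      (fun x hx hax => (hsplit x hx hax).1) (fun i => Nat.cast_nonneg _) hpxb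
    exact ⟨Fin.snoc _ c, Fin.snoc_nonneg (fun i => Nat.cast_nonneg _) hc, by simp, hax⟩
  · have hkM : 0 ≤ k / M := Int.ediv_nonneg hk hM.le
    have hiff (xb : Fin n → ℕ) : ∑ i, (xb i : ℤ) ≤ k / M ↔ ∑ i, xb i ≤ (k / M).toNat := by
      rw [← Nat.cast_sum]
      omega
    simpa only [hiff] using choose_le_ncard_sum_le n (k / M).toNat
end

section
/- Let p ∈ ℤⁿ_{++}, r ∈ ℤⁿ, u ∈ ℤⁿ_{++}, k an integer with 0 ≤ k < p·u, and M, β₁, β₂ integers with pM + r > 0 componentwise and max{r·x : p·x ≤ k, 0 ≤ x ≤ u} + kM < β₁ ≤ β₂ < min{r·x : p·x ≥ k+1, 0 ≤ x ≤ u} + (k+1)M. Then with a = pM + r, for every x ∈ ℝⁿ with 0 ≤ x ≤ u and β₁ ≤ a·x ≤ β₂, it holds that k < p·x < k+1 (i.e., the infeasibility of the knapsack β₁ ≤ ax ≤ β₂, 0 ≤ x ≤ u, x ∈ ℤⁿ is proven by the split disjunction px ≤ k ∨ px ≥ k+1). -/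
/-- Correctness of Recipe 1: if `max{rx : px ≤ k, 0 ≤ x ≤ u} + kM < β₁ ≤ β₂ <
min{rx : px ≥ k+1, 0 ≤ x ≤ u} + (k+1)M` and `a = pM + r > 0`, then the
infeasibility of the knapsack `β₁ ≤ ax ≤ β₂, 0 ≤ x ≤ u, x ∈ ℤⁿ` is proven by
the split disjunction `px ≤ k ∨ px ≥ k+1`. -/
theorem recipe1_correct (n : ℕ) (p r u : Fin n → ℤ)
    (hp : ∀ i, 0 < p i) (hu : ∀ i, 0 < u i)
    (k M β₁ β₂ : ℤ) (hk0 : 0 ≤ k) (hk : k < ∑ i, p i * u i)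
    (hpos : ∀ i, 0 < p i * M + r i) (hβ12 : β₁ ≤ β₂)
    (hβ₁ : sSup {v : ℝ | ∃ x : Fin n → ℝ,
        (∀ i, 0 ≤ x i ∧ x i ≤ (u i : ℝ)) ∧ (∑ i, (p i : ℝ) * x i) ≤ (k : ℝ) ∧
        v = ∑ i, (r i : ℝ) * x i} + (k : ℝ) * (M : ℝ) < (β₁ : ℝ))
    (hβ₂ : (β₂ : ℝ) < sInf {v : ℝ | ∃ x : Fin n → ℝ,
        (∀ i, 0 ≤ x i ∧ x i ≤ (u i : ℝ)) ∧ (k : ℝ) + 1 ≤ ∑ i, (p i : ℝ) * x i ∧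
        v = ∑ i, (r i : ℝ) * x i} + ((k : ℝ) + 1) * (M : ℝ)) :
    ∀ x : Fin n → ℝ, (∀ i, 0 ≤ x i ∧ x i ≤ (u i : ℝ)) →
      (β₁ : ℝ) ≤ ∑ i, ((p i * M + r i : ℤ) : ℝ) * x i →
      (∑ i, ((p i * M + r i : ℤ) : ℝ) * x i) ≤ (β₂ : ℝ) →
      ((k : ℝ) < ∑ i, (p i : ℝ) * x i ∧ (∑ i, (p i : ℝ) * x i) < (k : ℝ) + 1) := by
  intro x hbox h1 h2
  have hax : (∑ i, ((p i * M + r i : ℤ) : ℝ) * x i)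
      = (M : ℝ) * (∑ i, (p i : ℝ) * x i) + (∑ i, (r i : ℝ) * x i) := by
    rw [Finset.mul_sum, ← Finset.sum_add_distrib]
    exact Finset.sum_congr rfl fun i _ => by push_cast; ring
  constructor
  · by_contra hle
    push_neg at hle
    set A : ℝ := ∑ i, (p i : ℝ) * u i with hAdef
    have hA : (k : ℝ) < A := by
      have : ((k : ℤ) : ℝ) < ((∑ i, p i * u i : ℤ) : ℝ) := by exact_mod_cast hk
      simpa [hAdef] using this
    set px : ℝ := ∑ i, (p i : ℝ) * x i with hpx
    have hden : (0 : ℝ) < A - px := by linarith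
    set t : ℝ := ((k : ℝ) - px) / (A - px) with htdef
    have ht0 : 0 ≤ t := div_nonneg (by linarith) hden.le
    have ht1 : t ≤ 1 := (div_le_one hden).2 (by linarith)
    set x' : Fin n → ℝ := fun i => x i + t * (u i - x i) with hx'def
    have hbox' : ∀ i, 0 ≤ x' i ∧ x' i ≤ (u i : ℝ) := by
      intro i
      obtain ⟨h0, h1'⟩ := hbox i
      constructor
      · have : 0 ≤ t * (u i - x i) := mul_nonneg ht0 (by linarith)
        simp only [hx'def]; linarith
      · simp only [hx'def]; nlinarith
    have hxle : ∀ i, x i ≤ x' i := by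
      intro i
      have : 0 ≤ t * (u i - x i) := mul_nonneg ht0 (by linarith [(hbox i).2])
      simp only [hx'def]; linarith
    have hpx' : (∑ i, (p i : ℝ) * x' i) = (k : ℝ) := by
      have hcalc : (∑ i, (p i : ℝ) * x' i) = px + t * (A - px) := by
        have : (∑ i, (p i : ℝ) * x' i)
            = ∑ i, ((p i : ℝ) * x i + t * ((p i : ℝ) * u i) - t * ((p i : ℝ) * x i)) :=
          Finset.sum_congr rfl fun i _ => by simp only [hx'def]; ring
        rw [this]
        simp only [Finset.sum_sub_distrib, Finset.sum_add_distrib, ← Finset.mul_sum]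
        ring
      rw [hcalc, htdef, div_mul_cancel₀ _ hden.ne']
      ring
    have hmem : (∑ i, (r i : ℝ) * x' i) ∈ {v : ℝ | ∃ x : Fin n → ℝ,
        (∀ i, 0 ≤ x i ∧ x i ≤ (u i : ℝ)) ∧ (∑ i, (p i : ℝ) * x i) ≤ (k : ℝ) ∧
        v = ∑ i, (r i : ℝ) * x i} := ⟨x', hbox', le_of_eq hpx', rfl⟩
    have hbdd : BddAbove {v : ℝ | ∃ x : Fin n → ℝ,
        (∀ i, 0 ≤ x i ∧ x i ≤ (u i : ℝ)) ∧ (∑ i, (p i : ℝ) * x i) ≤ (k : ℝ) ∧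
        v = ∑ i, (r i : ℝ) * x i} := by
      refine ⟨∑ i, |(r i : ℝ)| * u i, ?_⟩
      rintro v ⟨y, hy, _, rfl⟩
      apply Finset.sum_le_sum
      intro i _
      have h0 := (hy i).1
      have h1' := (hy i).2
      nlinarith [le_abs_self ((r i : ℝ)), abs_nonneg ((r i : ℝ))]
    have hsup := le_csSup hbdd hmem
    have hax' : (∑ i, ((p i * M + r i : ℤ) : ℝ) * x i)
        ≤ ∑ i, ((p i * M + r i : ℤ) : ℝ) * x' i := by
      apply Finset.sum_le_sum
      intro i _
      have ha : (0 : ℝ) ≤ ((p i * M + r i : ℤ) : ℝ) := by exact_mod_cast (hpos i).le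
      exact mul_le_mul_of_nonneg_left (hxle i) ha
    have hax'eq : (∑ i, ((p i * M + r i : ℤ) : ℝ) * x' i)
        = (M : ℝ) * (∑ i, (p i : ℝ) * x' i) + (∑ i, (r i : ℝ) * x' i) := by
      rw [Finset.mul_sum, ← Finset.sum_add_distrib]
      exact Finset.sum_congr rfl fun i _ => by push_cast; ring
    rw [hpx'] at hax'eq
    linarith
  · by_contra hle
    push_neg at hle
    set px : ℝ := ∑ i, (p i : ℝ) * x i with hpx
    have hk1 : (0 : ℝ) < (k : ℝ) + 1 := by
      have : (0 : ℝ) ≤ (k : ℝ) := by exact_mod_cast hk0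
      linarith
    have hpxpos : (0 : ℝ) < px := lt_of_lt_of_le hk1 hle
    set t : ℝ := ((k : ℝ) + 1) / px with htdef
    have ht0 : 0 ≤ t := div_nonneg hk1.le hpxpos.le
    have ht1 : t ≤ 1 := (div_le_one hpxpos).2 hle
    set x' : Fin n → ℝ := fun i => t * x i with hx'def
    have hxle : ∀ i, x' i ≤ x i := by
      intro i
      have := (hbox i).1
      simp only [hx'def]; nlinarith
    have hbox' : ∀ i, 0 ≤ x' i ∧ x' i ≤ (u i : ℝ) := by
      intro i
      exact ⟨mul_nonneg ht0 (hbox i).1, le_trans (hxle i) (hbox i).2⟩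
    have hpx' : (∑ i, (p i : ℝ) * x' i) = (k : ℝ) + 1 := by
      have hcalc : (∑ i, (p i : ℝ) * x' i) = t * px := by
        rw [hpx, Finset.mul_sum]
        exact Finset.sum_congr rfl fun i _ => by simp only [hx'def]; ring
      rw [hcalc, htdef, div_mul_cancel₀ _ hpxpos.ne']
    have hmem : (∑ i, (r i : ℝ) * x' i) ∈ {v : ℝ | ∃ x : Fin n → ℝ,
        (∀ i, 0 ≤ x i ∧ x i ≤ (u i : ℝ)) ∧ (k : ℝ) + 1 ≤ (∑ i, (p i : ℝ) * x i) ∧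
        v = ∑ i, (r i : ℝ) * x i} := ⟨x', hbox', le_of_eq hpx'.symm, rfl⟩
    have hbdd : BddBelow {v : ℝ | ∃ x : Fin n → ℝ,
        (∀ i, 0 ≤ x i ∧ x i ≤ (u i : ℝ)) ∧ (k : ℝ) + 1 ≤ (∑ i, (p i : ℝ) * x i) ∧
        v = ∑ i, (r i : ℝ) * x i} := by
      refine ⟨∑ i, -(|(r i : ℝ)| * u i), ?_⟩
      rintro v ⟨y, hy, _, rfl⟩
      apply Finset.sum_le_sum
      intro i _
      have h0 := (hy i).1
      have h1' := (hy i).2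
      nlinarith [neg_abs_le ((r i : ℝ)), abs_nonneg ((r i : ℝ))]
    have hinf := csInf_le hbdd hmem
    have hax' : (∑ i, ((p i * M + r i : ℤ) : ℝ) * x' i)
        ≤ ∑ i, ((p i * M + r i : ℤ) : ℝ) * x i := by
      apply Finset.sum_le_sum
      intro i _
      have ha : (0 : ℝ) ≤ ((p i * M + r i : ℤ) : ℝ) := by exact_mod_cast (hpos i).le
      exact mul_le_mul_of_nonneg_left (hxle i) ha
    have hax'eq : (∑ i, ((p i * M + r i : ℤ) : ℝ) * x' i)
        = (M : ℝ) * (∑ i, (p i : ℝ) * x' i) + (∑ i, (r i : ℝ) * x' i) := by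
      rw [Finset.mul_sum, ← Finset.sum_add_distrib]
      exact Finset.sum_congr rfl fun i _ => by push_cast; ring
    rw [hpx'] at hax'eq
    linarith
end

section
/- Let n, t be integers with n, t ≥ 2. Consider the equation (n^{t+1}+1)x₁ + ⋯ + (n^{t+1}+n)x_n = n^{2t+1} + n^{t+1} + 1 with x ∈ ℝⁿ_{≥0}. Then every real solution x ≥ 0 satisfies n^t < x₁ + ⋯ + x_n < n^t + 1; in particular the equation has no nonnegative integer solution. -/
/-- Example 5: every nonnegative real solution of
`(n^{t+1}+1)x₁ + ⋯ + (n^{t+1}+n)x_n = n^{2t+1} + n^{t+1} + 1` satisfies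
`n^t < Σ xᵢ < n^t + 1`; in particular there is no nonnegative integer
solution. -/
theorem example_nt (n t : ℕ) (hn : 2 ≤ n) (ht : 2 ≤ t) :
    (∀ x : Fin n → ℝ, (∀ i, 0 ≤ x i) →
      (∑ i, ((n : ℝ) ^ (t + 1) + ((i.val : ℝ) + 1)) * x i) =
        (n : ℝ) ^ (2 * t + 1) + (n : ℝ) ^ (t + 1) + 1 →
      ((n : ℝ) ^ t < ∑ i, x i ∧ (∑ i, x i) < (n : ℝ) ^ t + 1)) ∧
    ¬ ∃ x : Fin n → ℕ,
      (∑ i, (n ^ (t + 1) + (i.val + 1)) * x i) = n ^ (2 * t + 1) + n ^ (t + 1) + 1 := by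
  have hn1 : (1 : ℝ) ≤ (n : ℝ) := by exact_mod_cast Nat.one_le_of_lt hn
  have hpt : (0 : ℝ) < (n : ℝ) ^ t := by positivity
  have hpt1 : (0 : ℝ) < (n : ℝ) ^ (t + 1) := by positivity
  have e1 : (n : ℝ) ^ (2 * t + 1) = (n : ℝ) ^ t * (n : ℝ) ^ (t + 1) := by
    rw [← pow_add]; congr 1; omega
  have e2 : (n : ℝ) ^ (t + 1) = (n : ℝ) ^ t * (n : ℝ) := by rw [pow_succ]
  have main : ∀ x : Fin n → ℝ, (∀ i, 0 ≤ x i) →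
      (∑ i, ((n : ℝ) ^ (t + 1) + ((i.val : ℝ) + 1)) * x i) =
        (n : ℝ) ^ (2 * t + 1) + (n : ℝ) ^ (t + 1) + 1 →
      ((n : ℝ) ^ t < ∑ i, x i ∧ (∑ i, x i) < (n : ℝ) ^ t + 1) := by
    intro x hx hsum
    set S := ∑ i, x i with hS
    have hlow : ((n : ℝ) ^ (t + 1) + 1) * S ≤
        ∑ i, ((n : ℝ) ^ (t + 1) + ((i.val : ℝ) + 1)) * x i := by
      rw [hS, Finset.mul_sum]
      apply Finset.sum_le_sum
      intro i _
      apply mul_le_mul_of_nonneg_right _ (hx i)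
      have : (0 : ℝ) ≤ (i.val : ℝ) := Nat.cast_nonneg _
      linarith
    have hhigh : (∑ i, ((n : ℝ) ^ (t + 1) + ((i.val : ℝ) + 1)) * x i) ≤
        ((n : ℝ) ^ (t + 1) + (n : ℝ)) * S := by
      rw [hS, Finset.mul_sum]
      apply Finset.sum_le_sum
      intro i _
      apply mul_le_mul_of_nonneg_right _ (hx i)
      have : ((i.val : ℝ) + 1) ≤ (n : ℝ) := by
        have := i.isLt
        exact_mod_cast Nat.succ_le_of_lt this
      linarith
    rw [hsum] at hlow hhigh
    constructor
    · nlinarith [hlow, hhigh, hpt, hpt1]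
    · nlinarith [hlow, hhigh, hpt, hpt1]
  refine ⟨main, ?_⟩
  rintro ⟨x, hx⟩
  have hreal := main (fun i => (x i : ℝ)) (fun i => Nat.cast_nonneg _) ?_
  · have hcast : (∑ i, ((x i : ℝ))) = ((∑ i, x i : ℕ) : ℝ) := by push_cast; ring
    rw [hcast] at hreal
    obtain ⟨h1, h2⟩ := hreal
    have h1' : n ^ t < ∑ i, x i := by exact_mod_cast h1
    have h2' : (∑ i, x i) < n ^ t + 1 := by exact_mod_cast h2
    omega
  · have h := congrArg (fun m : ℕ => (m : ℝ)) hx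
    push_cast at h
    exact h
end

section
/- Let n be odd, and consider the system 2Σ_{i=1}^n xᵢ = n with 0 ≤ x ≤ e. Then the system has no integer solution, and any branch-and-bound tree branching on individual variables requires at least 2^{(n−1)/2} LP-feasible nodes: for every F ⊆ {1,…,n} with |F| ≤ (n−1)/2 and every x̄ ∈ {0,1}^F, there is x ∈ [0,1]ⁿ with xᵢ = x̄ᵢ for i ∈ F and 2Σxᵢ = n. -/
/-- Jeroslow's problem: for odd `n`, the system `2Σxᵢ = n, 0 ≤ x ≤ e` has no
integer solution, and every branch-and-bound node fixing at most `(n−1)/2`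
variables to 0/1 values is LP-feasible, so ordinary B&B requires at least
`2^{(n−1)/2}` nodes. -/
theorem jeroslow (n : ℕ) (hn : Odd n) :
    (¬ ∃ x : Fin n → ℤ, (∀ i, 0 ≤ x i ∧ x i ≤ 1) ∧ 2 * (∑ i, x i) = (n : ℤ)) ∧
    (∀ F : Finset (Fin n), F.card ≤ (n - 1) / 2 →
      ∀ xb : Fin n → ℝ, (∀ i ∈ F, xb i = 0 ∨ xb i = 1) →
        ∃ x : Fin n → ℝ, (∀ i, 0 ≤ x i ∧ x i ≤ 1) ∧ (∀ i ∈ F, x i = xb i) ∧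
          2 * (∑ i, x i) = (n : ℝ)) := by
  obtain ⟨t, ht⟩ := hn
  constructor
  · rintro ⟨x, hx, hsum⟩
    set s := ∑ i, x i with hs
    have hnz : (n : ℤ) = 2 * t + 1 := by exact_mod_cast congrArg (Nat.cast : ℕ → ℤ) ht
    omega
  · intro F hF xb hxb
    have hmt : F.card ≤ t := by omega
    have hkm : (F.filter (fun i => xb i = 1)).card ≤ F.card := Finset.card_filter_le _ _
    set k := (F.filter (fun i => xb i = 1)).card with hk
    have hden : (0 : ℝ) < (n : ℝ) - F.card := by
      have : (F.card : ℝ) < (n : ℝ) := by exact_mod_cast (by omega : F.card < n)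
      linarith
    have hkt : (k : ℝ) ≤ t := by exact_mod_cast hkm.trans hmt
    have hnr : (n : ℝ) = 2 * t + 1 := by exact_mod_cast congrArg (Nat.cast : ℕ → ℝ) ht
    have hFr : (F.card : ℝ) ≤ t := by exact_mod_cast hmt
    set c : ℝ := ((n : ℝ) / 2 - k) / ((n : ℝ) - F.card) with hc
    have hnum_pos : (0 : ℝ) < (n : ℝ) / 2 - k := by rw [hnr]; linarith
    have hnum_le : (n : ℝ) / 2 - k ≤ (n : ℝ) - F.card := by
      have : (0:ℝ) ≤ k := Nat.cast_nonneg k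
      rw [hnr]; linarith
    have hc0 : 0 ≤ c := div_nonneg hnum_pos.le hden.le
    have hc1 : c ≤ 1 := (div_le_one hden).2 hnum_le
    refine ⟨fun i => if i ∈ F then xb i else c, ?_, ?_, ?_⟩
    · intro i
      by_cases h : i ∈ F
      · rcases hxb i h with h1 | h1 <;> simp [h, h1]
      · simp [h, hc0, hc1]
    · intro i hi; simp [hi]
    · have hsplit := Finset.sum_add_sum_compl F (fun i => if i ∈ F then xb i else c)
      have h1 : ∑ i ∈ F, (if i ∈ F then xb i else c) = (k : ℝ) := by
        rw [Finset.sum_ite_of_true (by intro i hi; exact hi)]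
        have : ∑ i ∈ F, xb i = ∑ i ∈ F, (if xb i = 1 then (1:ℝ) else 0) := by
          refine Finset.sum_congr rfl fun i hi => ?_
          rcases hxb i hi with h1 | h1 <;> simp [h1]
        rw [this, Finset.sum_boole]
      have h2 : ∑ i ∈ Fᶜ, (if i ∈ F then xb i else c) = ((n : ℝ) - F.card) * c := by
        rw [Finset.sum_ite_of_false (by intro i hi; simpa using hi)]
        rw [Finset.sum_const, Finset.card_compl, nsmul_eq_mul]
        congr 1
        rw [Nat.cast_sub (by simpa using F.card_le_univ)]
        simp
      beta_reduce
      rw [← hsplit, h1, h2, hc, mul_div_cancel₀ _ hden.ne']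
      ring
end

section
/- Let p ∈ ℤⁿ_{++}, r ∈ ℤⁿ with r₁/p₁ ≤ ⋯ ≤ r_n/p_n and p not a multiple of r, k ≥ 0 an integer, and M, β positive integers with pM + r > 0 componentwise and k(M + r_n/p_n) < β < (k+1)(M + r₁/p₁). Then with a = pM + r, every x ∈ ℝⁿ_{≥0} with a·x = β satisfies k < p·x < k+1; in particular the equation ax = β has no nonnegative integer solution. -/
/-- Correctness of Recipe 2: with `a = pM + r`, ratios `rᵢ/pᵢ` nondecreasing,
`p` not a multiple of `r`, and `k(M + r_n/p_n) < β < (k+1)(M + r₁/p₁)`, every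
nonnegative real solution of `ax = β` satisfies `k < px < k+1`; in particular
`ax = β` has no nonnegative integer solution. -/
theorem recipe2_correct (n : ℕ) (p r : Fin (n + 1) → ℤ)
    (hp : ∀ i, 0 < p i)
    (hrat : ∀ i j : Fin (n + 1), i ≤ j →
      (r i : ℝ) / (p i : ℝ) ≤ (r j : ℝ) / (p j : ℝ))
    (hnotmult : ¬ ∃ c : ℚ, ∀ i, (p i : ℚ) = c * (r i : ℚ))
    (k : ℤ) (hk : 0 ≤ k) (M β : ℤ) (hM : 0 < M) (hβ : 0 < β)
    (hpos : ∀ i, 0 < p i * M + r i)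
    (hlo : (k : ℝ) * ((M : ℝ) + (r (Fin.last n) : ℝ) / (p (Fin.last n) : ℝ)) < (β : ℝ))
    (hhi : (β : ℝ) < ((k : ℝ) + 1) * ((M : ℝ) + (r 0 : ℝ) / (p 0 : ℝ))) :
    (∀ x : Fin (n + 1) → ℝ, (∀ i, 0 ≤ x i) →
      (∑ i, ((p i * M + r i : ℤ) : ℝ) * x i) = (β : ℝ) →
      ((k : ℝ) < ∑ i, (p i : ℝ) * x i ∧ (∑ i, (p i : ℝ) * x i) < (k : ℝ) + 1)) ∧
    ¬ ∃ x : Fin (n + 1) → ℤ, (∀ i, 0 ≤ x i) ∧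
      (∑ i, (p i * M + r i) * x i) = β := by
  have hpR : ∀ i, (0 : ℝ) < (p i : ℝ) := fun i => by exact_mod_cast hp i
  have hmain : ∀ x : Fin (n + 1) → ℝ, (∀ i, 0 ≤ x i) →
      (∑ i, ((p i * M + r i : ℤ) : ℝ) * x i) = (β : ℝ) →
      ((k : ℝ) < ∑ i, (p i : ℝ) * x i ∧ (∑ i, (p i : ℝ) * x i) < (k : ℝ) + 1) := by
    intro x hx hsum
    set s : ℝ := ∑ i, (p i : ℝ) * x i with hs
    have hterm_nonneg : ∀ i : Fin (n+1), 0 ≤ (p i : ℝ) * x i :=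
      fun i => mul_nonneg (hpR i).le (hx i)
    have hsum' : (M : ℝ) * s + ∑ i, (r i : ℝ) * x i = (β : ℝ) := by
      rw [← hsum, hs, Finset.mul_sum, ← Finset.sum_add_distrib]
      apply Finset.sum_congr rfl
      intro i _
      push_cast
      ring
    -- upper bound on ∑ r_i x_i
    have hupper : ∑ i, (r i : ℝ) * x i
        ≤ ((r (Fin.last n) : ℝ) / (p (Fin.last n) : ℝ)) * s := by
      rw [hs, Finset.mul_sum]
      apply Finset.sum_le_sum
      intro i _
      have h1 := hrat i (Fin.last n) (Fin.le_last i)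
      have : (r i : ℝ) * x i = ((r i : ℝ) / (p i : ℝ)) * ((p i : ℝ) * x i) := by
        rw [div_mul_eq_mul_div, eq_div_iff (hpR i).ne']
        ring
      rw [this]
      exact mul_le_mul_of_nonneg_right h1 (hterm_nonneg i)
    have hlower : ((r 0 : ℝ) / (p 0 : ℝ)) * s ≤ ∑ i, (r i : ℝ) * x i := by
      rw [hs, Finset.mul_sum]
      apply Finset.sum_le_sum
      intro i _
      have h1 := hrat 0 i (Fin.zero_le i)
      have : (r i : ℝ) * x i = ((r i : ℝ) / (p i : ℝ)) * ((p i : ℝ) * x i) := by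
        rw [div_mul_eq_mul_div, eq_div_iff (hpR i).ne']
        ring
      rw [this]
      exact mul_le_mul_of_nonneg_right h1 (hterm_nonneg i)
    have hMn : (0 : ℝ) < (M : ℝ) + (r (Fin.last n) : ℝ) / (p (Fin.last n) : ℝ) := by
      have h := hpos (Fin.last n)
      have h' : (0:ℝ) < (p (Fin.last n) : ℝ) * (M:ℝ) + (r (Fin.last n) : ℝ) := by
        exact_mod_cast h
      have heq : (M:ℝ) + (r (Fin.last n):ℝ)/(p (Fin.last n):ℝ)
          = ((p (Fin.last n):ℝ)*(M:ℝ)+(r (Fin.last n):ℝ))/(p (Fin.last n):ℝ) := by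
        rw [eq_div_iff (hpR (Fin.last n)).ne', add_mul, div_mul_cancel₀ _ (hpR (Fin.last n)).ne']
        ring
      rw [heq]; exact div_pos h' (hpR (Fin.last n))
    have hM0 : (0 : ℝ) < (M : ℝ) + (r 0 : ℝ) / (p 0 : ℝ) := by
      have h := hpos 0
      have h' : (0:ℝ) < (p 0 : ℝ) * (M:ℝ) + (r 0 : ℝ) := by exact_mod_cast h
      have heq : (M:ℝ) + (r 0:ℝ)/(p 0:ℝ) = ((p 0:ℝ)*(M:ℝ)+(r 0:ℝ))/(p 0:ℝ) := by
        rw [eq_div_iff (hpR 0).ne', add_mul, div_mul_cancel₀ _ (hpR 0).ne']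
        ring
      rw [heq]; exact div_pos h' (hpR 0)
    constructor
    · have hβle : (β : ℝ) ≤ s * ((M : ℝ) + (r (Fin.last n) : ℝ) / (p (Fin.last n) : ℝ)) := by
        rw [← hsum']
        nlinarith [hupper]
      have : (k : ℝ) * ((M : ℝ) + (r (Fin.last n) : ℝ) / (p (Fin.last n) : ℝ))
          < s * ((M : ℝ) + (r (Fin.last n) : ℝ) / (p (Fin.last n) : ℝ)) :=
        lt_of_lt_of_le hlo hβle
      exact lt_of_mul_lt_mul_right this hMn.le
    · have hβge : s * ((M : ℝ) + (r 0 : ℝ) / (p 0 : ℝ)) ≤ (β : ℝ) := by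
        rw [← hsum']
        nlinarith [hlower]
      have : s * ((M : ℝ) + (r 0 : ℝ) / (p 0 : ℝ))
          < ((k : ℝ) + 1) * ((M : ℝ) + (r 0 : ℝ) / (p 0 : ℝ)) :=
        lt_of_le_of_lt hβge hhi
      exact lt_of_mul_lt_mul_right this hM0.le
  refine ⟨hmain, ?_⟩
  rintro ⟨x, hx, hsum⟩
  have hx' : ∀ i, (0:ℝ) ≤ ((x i : ℤ) : ℝ) := fun i => by exact_mod_cast hx i
  have hsum' : (∑ i, ((p i * M + r i : ℤ) : ℝ) * ((x i : ℤ) : ℝ)) = (β : ℝ) := by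
    have h := congrArg (fun z : ℤ => (z : ℝ)) hsum
    push_cast at h ⊢
    exact h
  obtain ⟨h1, h2⟩ := hmain (fun i => ((x i : ℤ) : ℝ)) hx' hsum'
  have hcast : (∑ i, (p i : ℝ) * ((x i : ℤ) : ℝ)) = ((∑ i, p i * x i : ℤ) : ℝ) := by
    push_cast; rfl
  rw [hcast] at h1 h2
  have hlt1 : k < ∑ i, p i * x i := by exact_mod_cast h1
  have hlt2 : (∑ i, p i * x i) < k + 1 := by exact_mod_cast h2
  omega
end

section
/- Let p ∈ ℤⁿ_{++} and r ∈ ℤⁿ, and let A be the (n+1)×n integer matrix whose first row is a = pM + r and whose remaining rows form the n×n identity. For every k ∈ {1,…,n−1}, the k-th successive minimum of the lattice generated by the columns of A satisfies Λ_k(L(A)) ≤ (‖r‖ + 1)·Λ_k(N(p)), where N(p) = {w ∈ ℤⁿ : p·w = 0}. -/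
/-!
The columns of `A` send `w ∈ ℤⁿ` to `Aw = (a·w, w)`, which is injective thanks to the identity
block, so linear independence is preserved. On `N(p)` the first entry is
`a·w = M (p·w) + r·w = r·w`, hence by Cauchy–Schwarz `‖Aw‖ ≤ |r·w| + ‖w‖ ≤ (‖r‖ + 1) ‖w‖`.
-/

/-- Euclidean norm of an integer vector. -/
noncomputable def intEnorm {n : ℕ} (v : Fin n → ℤ) : ℝ :=
  Real.sqrt (∑ i, ((v i : ℝ)) ^ 2)

open Matrix

lemma intEnorm_nonneg {n : ℕ} (v : Fin n → ℤ) : 0 ≤ intEnorm v :=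
  Real.sqrt_nonneg _

lemma intEnorm_sq {n : ℕ} (v : Fin n → ℤ) : intEnorm v ^ 2 = ∑ i, ((v i : ℝ)) ^ 2 :=
  Real.sq_sqrt (Finset.sum_nonneg fun _ _ => sq_nonneg _)

lemma abs_dotProduct_le_intEnorm_mul {n : ℕ} (r w : Fin n → ℤ) :
    |((r ⬝ᵥ w : ℤ) : ℝ)| ≤ intEnorm r * intEnorm w := by
  refine abs_le_of_sq_le_sq ?_ (mul_nonneg (intEnorm_nonneg r) (intEnorm_nonneg w))
  rw [mul_pow, intEnorm_sq, intEnorm_sq, dotProduct]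
  push_cast
  exact Finset.sum_mul_sq_le_sq_mul_sq _ _ _

lemma intEnorm_le_abs_head_add_intEnorm_tail {n : ℕ} (v : Fin (n + 1) → ℤ) :
    intEnorm v ≤ |(v 0 : ℝ)| + intEnorm (Fin.tail v) := by
  have hsplit : ∑ i, ((v i : ℝ)) ^ 2 = (v 0 : ℝ) ^ 2 + intEnorm (Fin.tail v) ^ 2 := by
    rw [Fin.sum_univ_succ, intEnorm_sq]
    rfl
  rw [intEnorm, Real.sqrt_le_left (add_nonneg (abs_nonneg _) (intEnorm_nonneg _)), hsplit]
  nlinarith [sq_abs (v 0 : ℝ), abs_nonneg (v 0 : ℝ), intEnorm_nonneg (Fin.tail v)]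

section RangespaceMatrix

variable {n : ℕ} {p r : Fin n → ℤ} {M : ℤ} {A : Matrix (Fin (n + 1)) (Fin n) ℤ}

lemma tail_mulVec_eq_self
    (hAI : ∀ (i : Fin n) (j : Fin n), A i.succ j = if i = j then 1 else 0) (x : Fin n → ℤ) :
    Fin.tail (A *ᵥ x) = x := by
  funext i
  simp [Fin.tail, mulVec, dotProduct, hAI]

lemma mulVec_zero_of_dotProduct_eq_zero (hA0 : ∀ j, A 0 j = p j * M + r j)
    {x : Fin n → ℤ} (hx : p ⬝ᵥ x = 0) : (A *ᵥ x) 0 = r ⬝ᵥ x := by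
  have hrow : (A *ᵥ x) 0 = M * (p ⬝ᵥ x) + r ⬝ᵥ x := by
    simp only [mulVec, dotProduct, hA0, Finset.mul_sum, ← Finset.sum_add_distrib]
    exact Finset.sum_congr rfl fun j _ => by ring
  rw [hrow, hx, mul_zero, zero_add]

lemma intEnorm_mulVec_le (hA0 : ∀ j, A 0 j = p j * M + r j)
    (hAI : ∀ (i : Fin n) (j : Fin n), A i.succ j = if i = j then 1 else 0)
    {x : Fin n → ℤ} (hx : p ⬝ᵥ x = 0) : intEnorm (A *ᵥ x) ≤ (intEnorm r + 1) * intEnorm x :=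
  calc intEnorm (A *ᵥ x)
      ≤ |(((A *ᵥ x) 0 : ℤ) : ℝ)| + intEnorm (Fin.tail (A *ᵥ x)) :=
        intEnorm_le_abs_head_add_intEnorm_tail _
    _ = |((r ⬝ᵥ x : ℤ) : ℝ)| + intEnorm x := by
        rw [mulVec_zero_of_dotProduct_eq_zero hA0 hx, tail_mulVec_eq_self hAI]
    _ ≤ intEnorm r * intEnorm x + intEnorm x := by
        gcongr; exact abs_dotProduct_le_intEnorm_mul r x
    _ = (intEnorm r + 1) * intEnorm x := by ring

lemma ker_mulVecLin_eq_bot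
    (hAI : ∀ (i : Fin n) (j : Fin n), A i.succ j = if i = j then 1 else 0) :
    LinearMap.ker A.mulVecLin = ⊥ :=
  LinearMap.ker_eq_bot.mpr fun x y hxy => by
    simpa only [mulVecLin_apply, tail_mulVec_eq_self hAI] using congrArg Fin.tail hxy

end RangespaceMatrix

theorem succ_min_rangespace_general (n : ℕ) (p r : Fin n → ℤ)
    (M : ℤ) (k : ℕ)
    (A : Matrix (Fin (n + 1)) (Fin n) ℤ)
    (hA0 : ∀ j, A 0 j = p j * M + r j)
    (hAI : ∀ (i : Fin n) (j : Fin n), A i.succ j = if i = j then 1 else 0) :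
    ∀ t : ℝ,
      (∃ w : Fin k → (Fin n → ℤ), LinearIndependent ℤ w ∧
        (∀ l, ∑ i, p i * w l i = 0) ∧ (∀ l, intEnorm (w l) ≤ t)) →
      ∃ v : Fin k → (Fin (n + 1) → ℤ), LinearIndependent ℤ v ∧
        (∀ l, ∃ x : Fin n → ℤ, v l = A.mulVec x) ∧
        (∀ l, intEnorm (v l) ≤ (intEnorm r + 1) * t) := by
  rintro t ⟨w, hli, hker, hnorm⟩
  refine ⟨fun l => A *ᵥ w l, hli.map' A.mulVecLin (ker_mulVecLin_eq_bot hAI),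
    fun l => ⟨w l, rfl⟩, fun l => ?_⟩
  calc intEnorm (A *ᵥ w l)
      ≤ (intEnorm r + 1) * intEnorm (w l) := intEnorm_mulVec_le hA0 hAI (hker l)
    _ ≤ (intEnorm r + 1) * t :=
        mul_le_mul_of_nonneg_left (hnorm l) (by linarith [intEnorm_nonneg r])

/-- Successive minima bound for the rangespace lattice: if `A` is the
`(n+1)×n` matrix with first row `a = pM + r` and identity below, then
`Λ_k(L(A)) ≤ (‖r‖+1)·Λ_k(N(p))`: any `k` linearly independent vectors of
`N(p) = {w : pw = 0}` of norm at most `t` yield `k` linearly independent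
vectors of the lattice generated by the columns of `A` of norm at most
`(‖r‖+1)t`. -/
theorem succ_min_rangespace (n : ℕ) (p r : Fin n → ℤ) (hp : ∀ i, 0 < p i)
    (M : ℤ) (k : ℕ) (hk1 : 1 ≤ k) (hk2 : k ≤ n - 1)
    (A : Matrix (Fin (n + 1)) (Fin n) ℤ)
    (hA0 : ∀ j, A 0 j = p j * M + r j)
    (hAI : ∀ (i : Fin n) (j : Fin n), A i.succ j = if i = j then 1 else 0) :
    ∀ t : ℝ,
      (∃ w : Fin k → (Fin n → ℤ), LinearIndependent ℤ w ∧
        (∀ l, ∑ i, p i * w l i = 0) ∧ (∀ l, intEnorm (w l) ≤ t)) →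
      ∃ v : Fin k → (Fin (n + 1) → ℤ), LinearIndependent ℤ v ∧
        (∀ l, ∃ x : Fin n → ℤ, v l = A.mulVec x) ∧
        (∀ l, intEnorm (v l) ≤ (intEnorm r + 1) * t) :=
  succ_min_rangespace_general n p r M k A hA0 hAI
end
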